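/- Let T be a tree rooted at v with every vertex other than v of degree at most 2 (a spider with center v). Then v belongs to no maximum dissociation set of T if and only if |C^2(v)| = 2, or |C^1(v)| + |C^2(v)| ≥ 3, where C^i(v) is the set of children w of v whose pendant path T_w has order ≡ i (mod 3). -/

import Mathlib

open scoped Classical

/-- `F` is a dissociation set of `G`: the induced subgraph `G[F]` has maximum degree ≤ 1. -/
def IsDissocSet {V : Type*} (G : SimpleGraph V) (F : Set V) : Prop :=
  ∀ u ∈ F, ∀ w ∈ F, ∀ w' ∈ F, G.Adj u w → G.Adj u w' → w = w'

/-- `F` is a maximum dissociation set of `G`. -/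
def IsMaxDissocSet {V : Type*} (G : SimpleGraph V) (F : Set V) : Prop :=
  IsDissocSet G F ∧ ∀ F' : Set V, IsDissocSet G F' → F'.ncard ≤ F.ncard

/-- The dissociation number ψ(G). -/
noncomputable def dissNum {V : Type*} (G : SimpleGraph V) : ℕ :=
  sSup {n | ∃ F : Set V, IsDissocSet G F ∧ F.ncard = n}

/-- `F` is a maximum dissociation set of the induced subgraph `G[S]`. -/
def IsMaxDissocOn {V : Type*} (G : SimpleGraph V) (S F : Set V) : Prop :=
  F ⊆ S ∧ IsDissocSet G F ∧
    ∀ F' : Set V, F' ⊆ S → IsDissocSet G F' → F'.ncard ≤ F.ncard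

/-- The dissociation number of the induced subgraph `G[S]`. -/
noncomputable def dissNumOn {V : Type*} (G : SimpleGraph V) (S : Set V) : ℕ :=
  sSup {n | ∃ F : Set V, F ⊆ S ∧ IsDissocSet G F ∧ F.ncard = n}

/-- The spider with center `none` and `k` legs, leg `i` being a path on `n i` vertices
hanging from the center. -/
def spider (k : ℕ) (n : Fin k → ℕ) : SimpleGraph (Option (Σ i : Fin k, Fin (n i))) :=
  SimpleGraph.fromRel (fun a b =>
    (a = none ∧ ∃ (i : Fin k) (h : 0 < n i), b = some ⟨i, ⟨0, h⟩⟩) ∨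
    (∃ (i : Fin k) (j j' : Fin (n i)), a = some ⟨i, j⟩ ∧ b = some ⟨i, j'⟩ ∧ (j' : ℕ) = j + 1))

/-- The vertex set of the `i`-th leg of the spider (the subtree below the `i`-th child). -/
def legSet (k : ℕ) (n : Fin k → ℕ) (i : Fin k) : Set (Option (Σ i : Fin k, Fin (n i))) :=
  {x | ∃ j : Fin (n i), x = some ⟨i, j⟩}

def psiP (m : ℕ) : ℕ := (2*m+2)/3

lemma noThree_bound : ∀ (m : ℕ) (F : Finset ℕ), (∀ x ∈ F, x < m) →
    (∀ j, ¬(j ∈ F ∧ j+1 ∈ F ∧ j+2 ∈ F)) → F.card ≤ psiP m := by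
  intro m
  induction m using Nat.strong_induction_on with
  | _ m ih =>
    intro F hm h3
    rcases lt_or_ge m 3 with h | h
    · have hsub : F ⊆ Finset.range m := fun x hx => Finset.mem_range.2 (hm x hx)
      have := Finset.card_le_card hsub
      rw [Finset.card_range] at this
      unfold psiP; omega
    · have hcard : (F.filter (· < 3)).card + (F.filter (¬ · < 3)).card = F.card :=
        Finset.card_filter_add_card_filter_not (p := (· < 3))
      set F2 := (F.filter (¬ · < 3)).image (· - 3) with hF2
      have himg : F2.card = (F.filter (¬ · < 3)).card := by
        rw [hF2]
        apply Finset.card_image_of_injOn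
        intro a ha b hb hab
        simp only [Finset.coe_filter, Set.mem_setOf_eq, not_lt] at ha hb
        have hab' : a - 3 = b - 3 := hab
        omega
      have hb1 : (F.filter (· < 3)).card ≤ 2 := by
        by_contra h'
        push_neg at h'
        have hsub : F.filter (· < 3) ⊆ ({0,1,2} : Finset ℕ) := by
          intro x hx
          simp only [Finset.mem_filter] at hx
          simp only [Finset.mem_insert, Finset.mem_singleton]
          omega
        have heq : F.filter (· < 3) = ({0,1,2} : Finset ℕ) :=
          Finset.eq_of_subset_of_card_le hsub (by
            have : ({0,1,2} : Finset ℕ).card = 3 := by decide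
            omega)
        have h0 : (0 : ℕ) ∈ F := by
          have : (0:ℕ) ∈ F.filter (· < 3) := heq ▸ (by decide)
          exact (Finset.mem_filter.1 this).1
        have h1 : (1 : ℕ) ∈ F := by
          have : (1:ℕ) ∈ F.filter (· < 3) := heq ▸ (by decide)
          exact (Finset.mem_filter.1 this).1
        have h2 : (2 : ℕ) ∈ F := by
          have : (2:ℕ) ∈ F.filter (· < 3) := heq ▸ (by decide)
          exact (Finset.mem_filter.1 this).1
        exact h3 0 ⟨h0, h1, h2⟩
      have hmem : ∀ x, x ∈ F2 ↔ x + 3 ∈ F := by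
        intro x
        simp only [hF2, Finset.mem_image, Finset.mem_filter, not_lt]
        constructor
        · rintro ⟨y, ⟨hy, h3y⟩, h⟩
          have h' : y - 3 = x := h
          have : y = x + 3 := by omega
          rwa [this] at hy
        · intro hx; exact ⟨x+3, ⟨hx, by omega⟩, by omega⟩
      have hb2 : F2.card ≤ psiP (m - 3) := by
        apply ih (m-3) (by omega)
        · intro x hx
          rw [hmem] at hx
          have := hm _ hx; omega
        · intro j hj
          refine h3 (j+3) ⟨(hmem j).1 hj.1, ?_, ?_⟩
          · have := (hmem (j+1)).1 hj.2.1
            rwa [show j+1+3 = j+3+1 by omega] at this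
          · have := (hmem (j+2)).1 hj.2.2
            rwa [show j+2+3 = j+3+2 by omega] at this
      unfold psiP at *
      omega

lemma noThree_bound_between (a m : ℕ) (F : Finset ℕ) (hm : ∀ x ∈ F, a ≤ x ∧ x < m)
    (h3 : ∀ j, ¬(j ∈ F ∧ j+1 ∈ F ∧ j+2 ∈ F)) : F.card ≤ psiP (m - a) := by
  set F2 := F.image (· - a) with hF2
  have himg : F.card = F2.card := by
    rw [hF2]
    symm
    apply Finset.card_image_of_injOn
    intro x hx y hy hxy
    simp only [Finset.mem_coe] at hx hy
    have := hm x hx; have := hm y hy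
    have hxy' : x - a = y - a := hxy
    omega
  have hmem : ∀ x, x ∈ F2 ↔ x + a ∈ F := by
    intro x
    simp only [hF2, Finset.mem_image]
    constructor
    · rintro ⟨y, hy, h⟩
      have := hm y hy
      have h' : y - a = x := h
      have hxy : y = x + a := by omega
      rwa [hxy] at hy
    · intro hx
      have := hm _ hx
      exact ⟨x+a, hx, by omega⟩
  rw [himg]
  apply noThree_bound
  · intro x hx; rw [hmem] at hx; have := hm _ hx; omega
  · intro j hj
    refine h3 (j+a) ⟨(hmem j).1 hj.1, ?_, ?_⟩
    · have := (hmem (j+1)).1 hj.2.1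
      rwa [show j+1+a = j+a+1 by omega] at this
    · have := (hmem (j+2)).1 hj.2.2
      rwa [show j+2+a = j+a+2 by omega] at this

lemma count_mod (m c : ℕ) (hc : c < 3) :
    ((Finset.range m).filter (fun j => j % 3 = c)).card = m / 3 + (if c < m % 3 then 1 else 0) := by
  induction m with
  | zero => simp
  | succ m ih =>
    rw [Finset.range_add_one, Finset.filter_insert]
    by_cases h : m % 3 = c
    · rw [if_pos h, Finset.card_insert_of_notMem (by simp), ih]
      split_ifs <;> omega
    · rw [if_neg h, ih]
      split_ifs <;> omega

lemma count_nmod (m c : ℕ) (hc : c < 3) :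
    ((Finset.range m).filter (fun j => ¬ j % 3 = c)).card = m - (m / 3 + (if c < m % 3 then 1 else 0)) := by
  have h1 := Finset.card_filter_add_card_filter_not (s := Finset.range m) (p := fun j => j % 3 = c)
  rw [count_mod m c hc] at h1
  rw [Finset.card_range] at h1
  omega

section SpiderLemmas

variable {k : ℕ} {n : Fin k → ℕ}

lemma spider_adj_none {w} (h : (spider k n).Adj none w) :
    ∃ (i : Fin k) (hi : 0 < n i), w = some ⟨i, ⟨0, hi⟩⟩ := by
  rw [spider, SimpleGraph.fromRel_adj] at h
  obtain ⟨hne, h | h⟩ := h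
  · rcases h with ⟨-, i, hi, rfl⟩ | ⟨i, j, j', h1, -, -⟩
    · exact ⟨i, hi, rfl⟩
    · exact absurd h1 (by simp)
  · rcases h with ⟨h1, -⟩ | ⟨i, j, j', -, h2, -⟩
    · exact absurd h1 (Ne.symm hne)
    · exact absurd h2 (by simp)

lemma spider_adj_some_some {i i' : Fin k} {j : Fin (n i)} {j' : Fin (n i')}
    (h : (spider k n).Adj (some ⟨i, j⟩) (some ⟨i', j'⟩)) :
    i = i' ∧ ((j' : ℕ) = (j : ℕ) + 1 ∨ (j : ℕ) = (j' : ℕ) + 1) := by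
  rw [spider, SimpleGraph.fromRel_adj] at h
  obtain ⟨hne, h | h⟩ := h
  · rcases h with ⟨h1, -⟩ | ⟨a, b, c, h1, h2, h3⟩
    · exact absurd h1 (by simp)
    · rw [Option.some.injEq] at h1 h2
      obtain ⟨rfl, hb⟩ := Sigma.mk.inj_iff.1 h1
      obtain ⟨rfl, hc⟩ := Sigma.mk.inj_iff.1 h2
      rw [heq_eq_eq] at hb hc
      subst hb; subst hc
      exact ⟨rfl, Or.inl h3⟩
  · rcases h with ⟨h1, -⟩ | ⟨a, b, c, h1, h2, h3⟩
    · exact absurd h1 (by simp)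
    · rw [Option.some.injEq] at h1 h2
      obtain ⟨rfl, hb⟩ := Sigma.mk.inj_iff.1 h1
      obtain ⟨rfl, hc⟩ := Sigma.mk.inj_iff.1 h2
      rw [heq_eq_eq] at hb hc
      subst hb; subst hc
      exact ⟨rfl, Or.inr h3⟩

lemma spider_adj_some_none {i : Fin k} {j : Fin (n i)}
    (h : (spider k n).Adj (some ⟨i, j⟩) none) : (j : ℕ) = 0 := by
  obtain ⟨i', hi', heq⟩ := spider_adj_none h.symm
  rw [Option.some.injEq] at heq
  obtain ⟨rfl, hb⟩ := Sigma.mk.inj_iff.1 heq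
  rw [heq_eq_eq] at hb
  rw [hb]

lemma spider_adj_succ {i : Fin k} {j j' : Fin (n i)} (h : (j' : ℕ) = (j : ℕ) + 1) :
    (spider k n).Adj (some ⟨i, j⟩) (some ⟨i, j'⟩) := by
  rw [spider, SimpleGraph.fromRel_adj]
  constructor
  · simp only [ne_eq, Option.some.injEq]
    intro hh
    obtain ⟨-, hb⟩ := Sigma.mk.inj_iff.1 hh
    rw [heq_eq_eq] at hb
    rw [hb] at h; omega
  · exact Or.inl (Or.inr ⟨i, j, j', rfl, rfl, h⟩)

lemma spider_adj_head {i : Fin k} (h : 0 < n i) :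
    (spider k n).Adj none (some ⟨i, ⟨0, h⟩⟩) := by
  rw [spider, SimpleGraph.fromRel_adj]
  exact ⟨by simp, Or.inl (Or.inl ⟨rfl, i, h, rfl⟩)⟩

end SpiderLemmas

section Counting

variable {k : ℕ} {n : Fin k → ℕ}

noncomputable def legF (F : Set (Option (Σ i : Fin k, Fin (n i)))) (i : Fin k) :
    Finset (Fin (n i)) :=
  Finset.univ.filter (fun j => some ⟨i, j⟩ ∈ F)

noncomputable def legNat (F : Set (Option (Σ i : Fin k, Fin (n i)))) (i : Fin k) : Finset ℕ :=
  (legF F i).image Fin.val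

lemma mem_legNat {F : Set (Option (Σ i : Fin k, Fin (n i)))} {i : Fin k} {x : ℕ} :
    x ∈ legNat F i ↔ ∃ j : Fin (n i), (j : ℕ) = x ∧ some ⟨i, j⟩ ∈ F := by
  simp only [legNat, legF, Finset.mem_image, Finset.mem_filter, Finset.mem_univ, true_and]
  constructor
  · rintro ⟨j, hj, rfl⟩; exact ⟨j, rfl, hj⟩
  · rintro ⟨j, rfl, hj⟩; exact ⟨j, hj, rfl⟩

lemma legNat_card {F : Set (Option (Σ i : Fin k, Fin (n i)))} {i : Fin k} :
    (legNat F i).card = (legF F i).card :=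
  Finset.card_image_of_injective _ Fin.val_injective

lemma card_decomp (F : Set (Option (Σ i : Fin k, Fin (n i)))) :
    F.ncard = (if none ∈ F then 1 else 0) + ∑ i, (legF F i).card := by
  classical
  have hfin : F.Finite := Set.toFinite F
  rw [Set.ncard_eq_toFinset_card F hfin]
  set T : Finset (Option (Σ i : Fin k, Fin (n i))) :=
    (Finset.univ.sigma (fun i => legF F i)).map ⟨some, Option.some_injective _⟩ with hTdef
  have hTcard : T.card = ∑ i, (legF F i).card := by
    rw [hTdef, Finset.card_map, Finset.card_sigma]
  have hnoneT : none ∉ T := by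
    rw [hTdef]
    simp [Finset.mem_map]
  have hmemT : ∀ x : Σ i : Fin k, Fin (n i), some x ∈ T ↔ some x ∈ F := by
    rintro ⟨i, j⟩
    rw [hTdef]
    simp only [Finset.mem_map, Finset.mem_sigma, Finset.mem_univ, true_and,
      Function.Embedding.coeFn_mk, Option.some.injEq, legF, Finset.mem_filter]
    constructor
    · rintro ⟨a, hb, rfl⟩; exact hb
    · intro h; exact ⟨⟨i, j⟩, h, rfl⟩
  by_cases h0 : none ∈ F
  · have hset : hfin.toFinset = insert none T := by
      ext x
      cases x with
      | none =>
        simp only [Set.Finite.mem_toFinset, Finset.mem_insert]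
        exact ⟨fun _ => Or.inl trivial, fun _ => h0⟩
      | some x =>
        simp only [Set.Finite.mem_toFinset, Finset.mem_insert, hmemT]
        simp
    rw [hset, Finset.card_insert_of_notMem hnoneT, if_pos h0, hTcard]
    omega
  · have hset : hfin.toFinset = T := by
      ext x
      cases x with
      | none =>
        simp only [Set.Finite.mem_toFinset]
        exact ⟨fun h => absurd h h0, fun h => absurd h hnoneT⟩
      | some x => simp only [Set.Finite.mem_toFinset, hmemT]
    rw [hset, if_neg h0, hTcard, zero_add]

lemma fin_filter_card (m : ℕ) (p : ℕ → Prop) [DecidablePred p]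
    [DecidablePred (fun j : Fin m => p (j : ℕ))] :
    (Finset.univ.filter (fun j : Fin m => p (j : ℕ))).card
      = ((Finset.range m).filter p).card := by
  rw [← Finset.card_image_of_injective (Finset.univ.filter (fun j : Fin m => p (j : ℕ))) Fin.val_injective]
  congr 1
  ext x
  simp only [Finset.mem_image, Finset.mem_filter, Finset.mem_univ, true_and, Finset.mem_range]
  constructor
  · rintro ⟨j, hj, rfl⟩; exact ⟨j.isLt, hj⟩
  · rintro ⟨hx, hp⟩; exact ⟨⟨x, hx⟩, hp, rfl⟩

end Counting

section Legs

variable {k : ℕ} {n : Fin k → ℕ}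

lemma psiP_bound1 (m b : ℕ) (h : 1 ≤ m) (hb : b ≤ psiP (m - 1)) :
    b + (if m % 3 = 0 then 0 else 1) ≤ psiP m := by
  obtain ⟨q, r, rfl, hr⟩ : ∃ q r, m = 3 * q + r ∧ r < 3 := ⟨m / 3, m % 3, by omega, by omega⟩
  unfold psiP at *
  interval_cases r <;> split_ifs <;> omega

lemma psiP_bound2 (m b : ℕ) (h : 1 ≤ m) (h1 : 1 ≤ b) (hb : b - 1 ≤ psiP (m - 2)) :
    b + (if m % 3 = 2 then 1 else 0) ≤ psiP m := by
  obtain ⟨q, r, rfl, hr⟩ : ∃ q r, m = 3 * q + r ∧ r < 3 := ⟨m / 3, m % 3, by omega, by omega⟩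
  unfold psiP at *
  interval_cases r <;> split_ifs <;> omega

lemma cnt_mod2 (m : ℕ) :
    ((Finset.range m).filter (fun x => ¬ x % 3 = 2)).card = psiP m := by
  rw [count_nmod m 2 (by omega)]
  obtain ⟨q, r, rfl, hr⟩ : ∃ q r, m = 3 * q + r ∧ r < 3 := ⟨m / 3, m % 3, by omega, by omega⟩
  unfold psiP
  interval_cases r <;> split_ifs <;> omega

lemma cnt_mod0 (m : ℕ) (h : 1 ≤ m) :
    ((Finset.range m).filter (fun x => ¬ x % 3 = 0)).card + (if m % 3 = 0 then 0 else 1)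
      = psiP m := by
  rw [count_nmod m 0 (by omega)]
  obtain ⟨q, r, rfl, hr⟩ : ∃ q r, m = 3 * q + r ∧ r < 3 := ⟨m / 3, m % 3, by omega, by omega⟩
  unfold psiP
  interval_cases r <;> split_ifs <;> omega

lemma cnt_mod1 (m : ℕ) (h1 : m % 3 = 1) :
    ((Finset.range m).filter (fun x => ¬ x % 3 = 1)).card = psiP m := by
  rw [count_nmod m 1 (by omega)]
  obtain ⟨q, r, rfl, hr⟩ : ∃ q r, m = 3 * q + r ∧ r < 3 := ⟨m / 3, m % 3, by omega, by omega⟩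
  unfold psiP
  interval_cases r <;> split_ifs <;> omega

lemma some_mk_eq_iff {i : Fin k} {a b : Fin (n i)} :
    (some (⟨i, a⟩ : Σ i : Fin k, Fin (n i)) = some ⟨i, b⟩) ↔ a = b := by
  simp

lemma leg_noThree {F : Set (Option (Σ i : Fin k, Fin (n i)))}
    (hd : IsDissocSet (spider k n) F) (i : Fin k) (j : ℕ) :
    ¬(j ∈ legNat F i ∧ j + 1 ∈ legNat F i ∧ j + 2 ∈ legNat F i) := by
  rintro ⟨h1, h2, h3⟩
  rw [mem_legNat] at h1 h2 h3
  obtain ⟨a, ha, haF⟩ := h1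
  obtain ⟨b, hb, hbF⟩ := h2
  obtain ⟨c, hc, hcF⟩ := h3
  have hab : (spider k n).Adj (some ⟨i, b⟩) (some ⟨i, a⟩) :=
    (spider_adj_succ (by omega)).symm
  have hbc : (spider k n).Adj (some ⟨i, b⟩) (some ⟨i, c⟩) :=
    spider_adj_succ (by omega)
  have heq := hd _ hbF _ haF _ hcF hab hbc
  rw [some_mk_eq_iff] at heq
  subst heq
  omega

lemma head_unique {F : Set (Option (Σ i : Fin k, Fin (n i)))}
    (hd : IsDissocSet (spider k n) F) (h0 : none ∈ F) {i i' : Fin k}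
    (hi : 0 ∈ legNat F i) (hi' : 0 ∈ legNat F i') : i = i' := by
  rw [mem_legNat] at hi hi'
  obtain ⟨a, ha, haF⟩ := hi
  obtain ⟨b, hb, hbF⟩ := hi'
  have hpos : 0 < n i := lt_of_le_of_lt (Nat.zero_le _) a.isLt
  have hpos' : 0 < n i' := lt_of_le_of_lt (Nat.zero_le _) b.isLt
  have hA : a = ⟨0, hpos⟩ := Fin.ext ha
  have hB : b = ⟨0, hpos'⟩ := Fin.ext hb
  subst hA; subst hB
  have hadj : (spider k n).Adj none (some ⟨i, ⟨0, hpos⟩⟩) := spider_adj_head hpos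
  have hadj' : (spider k n).Adj none (some ⟨i', ⟨0, hpos'⟩⟩) := spider_adj_head hpos'
  have heq := hd none h0 _ haF _ hbF hadj hadj'
  rw [Option.some.injEq] at heq
  exact (Sigma.mk.inj_iff.1 heq).1

lemma leg_bound0 {F : Set (Option (Σ i : Fin k, Fin (n i)))}
    (hd : IsDissocSet (spider k n) F) (i : Fin k) : (legNat F i).card ≤ psiP (n i) := by
  apply noThree_bound
  · intro x hx
    rw [mem_legNat] at hx
    obtain ⟨j, hj, -⟩ := hx
    omega
  · exact leg_noThree hd i

lemma leg_bound {F : Set (Option (Σ i : Fin k, Fin (n i)))}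
    (hd : IsDissocSet (spider k n) F) (h0 : none ∈ F) (i : Fin k) (hni : 1 ≤ n i) :
    (legNat F i).card
      + (if 0 ∈ legNat F i then (if n i % 3 = 2 then 1 else 0)
          else (if n i % 3 = 0 then 0 else 1)) ≤ psiP (n i) := by
  have hm : ∀ x ∈ legNat F i, x < n i := by
    intro x hx
    rw [mem_legNat] at hx
    obtain ⟨j, hj, -⟩ := hx
    omega
  have h3 := leg_noThree hd i
  by_cases hhead : (0:ℕ) ∈ legNat F i
  · rw [if_pos hhead]
    have h1 : (1:ℕ) ∉ legNat F i := by
      intro h1m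
      rw [mem_legNat] at h1m
      obtain ⟨b, hb, hbF⟩ := h1m
      have h0m := hhead
      rw [mem_legNat] at h0m
      obtain ⟨a, ha, haF⟩ := h0m
      have hpos : 0 < n i := lt_of_le_of_lt (Nat.zero_le _) a.isLt
      have hA : a = ⟨0, hpos⟩ := Fin.ext ha
      subst hA
      have hadj1 : (spider k n).Adj (some ⟨i, (⟨0, hpos⟩ : Fin (n i))⟩) none :=
        (spider_adj_head hpos).symm
      have hadj2 : (spider k n).Adj (some ⟨i, (⟨0, hpos⟩ : Fin (n i))⟩) (some ⟨i, b⟩) :=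
        spider_adj_succ (by omega)
      have := hd _ haF none h0 _ hbF hadj1 hadj2
      exact Option.some_ne_none _ this.symm
    have hbound : ((legNat F i).erase 0).card ≤ psiP (n i - 2) := by
      apply noThree_bound_between
      · intro x hx
        have hx' := Finset.mem_of_mem_erase hx
        have hne := Finset.ne_of_mem_erase hx
        have hne1 : x ≠ 1 := by rintro rfl; exact h1 hx'
        exact ⟨by omega, hm x hx'⟩
      · intro j hj
        exact h3 j ⟨Finset.mem_of_mem_erase hj.1, Finset.mem_of_mem_erase hj.2.1,
          Finset.mem_of_mem_erase hj.2.2⟩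
    have hcard : ((legNat F i).erase 0).card = (legNat F i).card - 1 :=
      Finset.card_erase_of_mem hhead
    have hpos : 1 ≤ (legNat F i).card := Finset.card_pos.2 ⟨0, hhead⟩
    exact psiP_bound2 (n i) _ hni hpos (by omega)
  · rw [if_neg hhead]
    have hbound : (legNat F i).card ≤ psiP (n i - 1) := by
      apply noThree_bound_between
      · intro x hx
        have hne : x ≠ 0 := by rintro rfl; exact hhead hx
        exact ⟨by omega, hm x hx⟩
      · exact h3
    exact psiP_bound1 (n i) _ hni hbound

/-- The pattern set: center iff `b`, and in leg `i` the vertices with index `≢ c i (mod 3)`. -/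
def pattS (b : Bool) (c : Fin k → ℕ) : Set (Option (Σ i : Fin k, Fin (n i))) :=
  {x | x.elim (b = true) (fun p => ¬ (p.2 : ℕ) % 3 = c p.1)}

lemma pattS_dissoc (b : Bool) (c : Fin k → ℕ) (hc3 : ∀ i, c i < 3)
    (h01 : b = true → ∀ i, c i ≠ 0 → c i = 1)
    (huniq : b = true → ∀ i i', c i ≠ 0 → c i' ≠ 0 → i = i') :
    IsDissocSet (spider k n) (pattS b c) := by
  intro u hu w hw w' hw' huw huw'
  cases u with
  | none =>
    have hb : b = true := hu
    obtain ⟨iw, hw1, rfl⟩ := spider_adj_none huw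
    obtain ⟨iw', hw1', rfl⟩ := spider_adj_none huw'
    have hcw : ¬ ((⟨0, hw1⟩ : Fin (n iw)) : ℕ) % 3 = c iw := hw
    have hcw' : ¬ ((⟨0, hw1'⟩ : Fin (n iw')) : ℕ) % 3 = c iw' := hw'
    have hcw2 : ¬ (0 : ℕ) % 3 = c iw := hcw
    have hcw2' : ¬ (0 : ℕ) % 3 = c iw' := hcw'
    have h1 : c iw ≠ 0 := by omega
    have h2 : c iw' ≠ 0 := by omega
    have : iw = iw' := huniq hb _ _ h1 h2
    subst this
    rfl
  | some x =>
    obtain ⟨i, j⟩ := x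
    have hu' : ¬ (j : ℕ) % 3 = c i := hu
    cases w with
    | none =>
      cases w' with
      | none => rfl
      | some y =>
        exfalso
        obtain ⟨i3, j3⟩ := y
        obtain ⟨h3, hv3⟩ := spider_adj_some_some huw'
        subst h3
        have hj0 : (j : ℕ) = 0 := spider_adj_some_none huw
        have hb : b = true := hw
        have hc1 : c i = 1 := h01 hb i (by omega)
        have hw'' : ¬ (j3 : ℕ) % 3 = c i := hw'
        omega
    | some y =>
      obtain ⟨i2, j2⟩ := y
      obtain ⟨h2, hv2⟩ := spider_adj_some_some huw
      subst h2
      have hw2 : ¬ (j2 : ℕ) % 3 = c i := hw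
      cases w' with
      | none =>
        exfalso
        have hj0 : (j : ℕ) = 0 := spider_adj_some_none huw'
        have hb : b = true := hw'
        have hc1 : c i = 1 := h01 hb i (by omega)
        omega
      | some z =>
        obtain ⟨i3, j3⟩ := z
        obtain ⟨h3, hv3⟩ := spider_adj_some_some huw'
        subst h3
        have hw3 : ¬ (j3 : ℕ) % 3 = c i := hw'
        by_cases hjj : (j2 : ℕ) = (j3 : ℕ)
        · rw [some_mk_eq_iff]
          exact Fin.ext hjj
        · exfalso
          have := hc3 i
          omega

lemma pattS_ncard (b : Bool) (c : Fin k → ℕ) :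
    (pattS b c : Set (Option (Σ i : Fin k, Fin (n i)))).ncard
      = (if b then 1 else 0)
        + ∑ i, ((Finset.range (n i)).filter (fun x => ¬ x % 3 = c i)).card := by
  rw [card_decomp]
  congr 1
  · by_cases hb : b
    · have hmem : (none : Option (Σ i : Fin k, Fin (n i))) ∈ pattS b c := hb
      rw [if_pos hb, if_pos hmem]
    · have hmem : (none : Option (Σ i : Fin k, Fin (n i))) ∉ pattS b c := fun h => hb h
      rw [if_neg hb, if_neg hmem]
  · apply Finset.sum_congr rfl
    intro i _
    have hleg : legF (pattS b c) i
        = Finset.univ.filter (fun j : Fin (n i) => ¬ (j : ℕ) % 3 = c i) := by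
      apply Finset.filter_congr
      intro j _
      exact Iff.rfl
    rw [hleg]
    exact fin_filter_card (n i) (fun x => ¬ x % 3 = c i)

end Legs

section Main

variable {k : ℕ} {n : Fin k → ℕ}

lemma bound_without (F : Set (Option (Σ i : Fin k, Fin (n i))))
    (hd : IsDissocSet (spider k n) F) (h0 : none ∉ F) :
    F.ncard ≤ ∑ i, psiP (n i) := by
  rw [card_decomp F, if_neg h0, zero_add]
  apply Finset.sum_le_sum
  intro i _
  rw [← legNat_card]
  exact leg_bound0 hd i

lemma bound_with (hn : ∀ i, 1 ≤ n i) (F : Set (Option (Σ i : Fin k, Fin (n i))))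
    (hd : IsDissocSet (spider k n) F) (h0 : none ∈ F) :
    ∃ g, g ≤ 1 ∧ (g = 1 → ∃ i0, n i0 % 3 = 1) ∧
      F.ncard + ∑ i, (if n i % 3 = 0 then 0 else 1) ≤ 1 + (∑ i, psiP (n i)) + g := by
  have hcardF : F.ncard = 1 + ∑ i, (legNat F i).card := by
    rw [card_decomp F, if_pos h0]
    congr 1
    exact Finset.sum_congr rfl (fun i _ => legNat_card.symm)
  have hsum : (∑ i, (legNat F i).card)
      + ∑ i, (if (0:ℕ) ∈ legNat F i then (if n i % 3 = 2 then 1 else 0)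
          else (if n i % 3 = 0 then 0 else 1)) ≤ ∑ i, psiP (n i) := by
    rw [← Finset.sum_add_distrib]
    exact Finset.sum_le_sum (fun i _ => leg_bound hd h0 i (hn i))
  by_cases hx : ∃ i0, (0:ℕ) ∈ legNat F i0 ∧ n i0 % 3 = 1
  · obtain ⟨i0, hh, h1⟩ := hx
    refine ⟨1, le_refl 1, fun _ => ⟨i0, h1⟩, ?_⟩
    have e1 : (if n i0 % 3 = 0 then (0:ℕ) else 1)
        + ∑ i ∈ Finset.univ.erase i0, (if n i % 3 = 0 then (0:ℕ) else 1)
        = ∑ i, (if n i % 3 = 0 then (0:ℕ) else 1) :=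
      Finset.add_sum_erase _ (fun i => if n i % 3 = 0 then (0:ℕ) else 1) (Finset.mem_univ i0)
    have e2 : (if (0:ℕ) ∈ legNat F i0 then (if n i0 % 3 = 2 then (1:ℕ) else 0)
          else (if n i0 % 3 = 0 then 0 else 1))
        + ∑ i ∈ Finset.univ.erase i0, (if (0:ℕ) ∈ legNat F i then (if n i % 3 = 2 then (1:ℕ) else 0)
          else (if n i % 3 = 0 then 0 else 1))
        = ∑ i, (if (0:ℕ) ∈ legNat F i then (if n i % 3 = 2 then (1:ℕ) else 0)
          else (if n i % 3 = 0 then 0 else 1)) :=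
      Finset.add_sum_erase _ (fun i => if (0:ℕ) ∈ legNat F i then (if n i % 3 = 2 then (1:ℕ) else 0)
          else (if n i % 3 = 0 then 0 else 1)) (Finset.mem_univ i0)
    have e3 : ∑ i ∈ Finset.univ.erase i0, (if (0:ℕ) ∈ legNat F i then (if n i % 3 = 2 then (1:ℕ) else 0)
          else (if n i % 3 = 0 then 0 else 1))
        = ∑ i ∈ Finset.univ.erase i0, (if n i % 3 = 0 then (0:ℕ) else 1) := by
      apply Finset.sum_congr rfl
      intro i hi
      have hnm : (0:ℕ) ∉ legNat F i := by
        intro hcon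
        exact Finset.ne_of_mem_erase hi (head_unique hd h0 hcon hh)
      rw [if_neg hnm]
    have e4 : (if n i0 % 3 = 0 then (0:ℕ) else 1) = 1 := by rw [if_neg (by omega)]
    have e5 : (if (0:ℕ) ∈ legNat F i0 then (if n i0 % 3 = 2 then (1:ℕ) else 0)
          else (if n i0 % 3 = 0 then 0 else 1)) = 0 := by
      rw [if_pos hh, if_neg (by omega)]
    omega
  · refine ⟨0, by omega, fun h => absurd h (by omega), ?_⟩
    have e : ∑ i, (if (0:ℕ) ∈ legNat F i then (if n i % 3 = 2 then (1:ℕ) else 0)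
          else (if n i % 3 = 0 then 0 else 1))
        = ∑ i, (if n i % 3 = 0 then (0:ℕ) else 1) := by
      apply Finset.sum_congr rfl
      intro i _
      by_cases hh : (0:ℕ) ∈ legNat F i
      · have hn1 : ¬ n i % 3 = 1 := fun h => hx ⟨i, hh, h⟩
        rw [if_pos hh]
        split_ifs <;> omega
      · rw [if_neg hh]
    omega

end Main

theorem stmt8 (k : ℕ) (n : Fin k → ℕ) (hn : ∀ i, 1 ≤ n i) :
    (∀ F, IsMaxDissocSet (spider k n) F → none ∉ F) ↔
      ((Finset.univ.filter fun i => n i % 3 = 2).card = 2 ∨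
        3 ≤ (Finset.univ.filter fun i => n i % 3 = 1).card +
            (Finset.univ.filter fun i => n i % 3 = 2).card) := by
  have ht : (Finset.univ.filter fun i => n i % 3 = 1).card
      + (Finset.univ.filter fun i => n i % 3 = 2).card
      = ∑ i, (if n i % 3 = 0 then (0:ℕ) else 1) := by
    rw [Finset.card_filter, Finset.card_filter, ← Finset.sum_add_distrib]
    apply Finset.sum_congr rfl
    intro i _
    split_ifs <;> omega
  constructor
  · -- (∀ F max, none ∉ F) → condition; by contraposition
    intro hall
    by_contra hcond
    push_neg at hcond
    obtain ⟨hne2, hlt3⟩ := hcond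
    by_cases hk1pos : ∃ i0 : Fin k, n i0 % 3 = 1
    · obtain ⟨i0, hi0⟩ := hk1pos
      have hdis : IsDissocSet (spider k n)
          (pattS (n := n) true (fun i => if i = i0 then 1 else 0)) := by
        apply pattS_dissoc
        · intro i; split_ifs <;> omega
        · intro _ i hci
          by_cases h : i = i0
          · rw [if_pos h]
          · rw [if_neg h] at hci; omega
        · intro _ i i' hci hci'
          by_cases h : i = i0
          · by_cases h' : i' = i0
            · rw [h, h']
            · rw [if_neg h'] at hci'; omega
          · rw [if_neg h] at hci; omega
      have hcard : (pattS (n := n) true (fun i => if i = i0 then 1 else 0)).ncard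
          = 1 + ∑ i, ((Finset.range (n i)).filter
              (fun x => ¬ x % 3 = (if i = i0 then 1 else 0))).card := by
        rw [pattS_ncard]
        norm_num
      have hsum : (∑ i, ((Finset.range (n i)).filter
              (fun x => ¬ x % 3 = (if i = i0 then 1 else 0))).card)
          + ∑ i, (if n i % 3 = 0 then (0:ℕ) else 1) = (∑ i, psiP (n i)) + 1 := by
        have e1 : ((Finset.range (n i0)).filter
              (fun x => ¬ x % 3 = (if i0 = i0 then 1 else 0))).card
            + ∑ i ∈ Finset.univ.erase i0, ((Finset.range (n i)).filter
              (fun x => ¬ x % 3 = (if i = i0 then 1 else 0))).card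
            = ∑ i, ((Finset.range (n i)).filter
              (fun x => ¬ x % 3 = (if i = i0 then 1 else 0))).card :=
          Finset.add_sum_erase _ (fun i => ((Finset.range (n i)).filter
              (fun x => ¬ x % 3 = (if i = i0 then 1 else 0))).card) (Finset.mem_univ i0)
        have e2 : (if n i0 % 3 = 0 then (0:ℕ) else 1)
            + ∑ i ∈ Finset.univ.erase i0, (if n i % 3 = 0 then (0:ℕ) else 1)
            = ∑ i, (if n i % 3 = 0 then (0:ℕ) else 1) :=
          Finset.add_sum_erase _ (fun i => if n i % 3 = 0 then (0:ℕ) else 1) (Finset.mem_univ i0)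
        have e3 : psiP (n i0) + ∑ i ∈ Finset.univ.erase i0, psiP (n i) = ∑ i, psiP (n i) :=
          Finset.add_sum_erase _ (fun i => psiP (n i)) (Finset.mem_univ i0)
        have e4 : ((Finset.range (n i0)).filter
              (fun x => ¬ x % 3 = (if i0 = i0 then 1 else 0))).card = psiP (n i0) := by
          rw [if_pos rfl]
          exact cnt_mod1 (n i0) hi0
        have e5 : (if n i0 % 3 = 0 then (0:ℕ) else 1) = 1 := by rw [if_neg (by omega)]
        have e6 : ∑ i ∈ Finset.univ.erase i0, ((Finset.range (n i)).filter
              (fun x => ¬ x % 3 = (if i = i0 then 1 else 0))).card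
            + ∑ i ∈ Finset.univ.erase i0, (if n i % 3 = 0 then (0:ℕ) else 1)
            = ∑ i ∈ Finset.univ.erase i0, psiP (n i) := by
          rw [← Finset.sum_add_distrib]
          apply Finset.sum_congr rfl
          intro i hi
          rw [if_neg (Finset.ne_of_mem_erase hi)]
          exact cnt_mod0 (n i) (hn i)
        omega
      refine absurd (show (none : Option (Σ i : Fin k, Fin (n i)))
          ∈ pattS (n := n) true (fun i => if i = i0 then 1 else 0) from rfl) ?_
      apply hall
      constructor
      · exact hdis
      · intro F' hd'
        by_cases h0' : none ∈ F'
        · obtain ⟨g, hg1, -, hb⟩ := bound_with hn F' hd' h0'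
          omega
        · have hb := bound_without F' hd' h0'
          omega
    · push_neg at hk1pos
      have hk1z : (Finset.univ.filter fun i => n i % 3 = 1).card = 0 := by
        rw [Finset.card_eq_zero, Finset.filter_eq_empty_iff]
        intro i _
        exact hk1pos i
      have hdis : IsDissocSet (spider k n) (pattS (n := n) true (fun _ => 0)) := by
        apply pattS_dissoc
        · intro i; omega
        · intro _ i hci; omega
        · intro _ i i' hci; omega
      have hcard : (pattS (n := n) true (fun _ => (0:ℕ))).ncard
          = 1 + ∑ i, ((Finset.range (n i)).filter (fun x => ¬ x % 3 = 0)).card := by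
        rw [pattS_ncard]
        norm_num
      have hsum : (∑ i, ((Finset.range (n i)).filter (fun x => ¬ x % 3 = 0)).card)
          + ∑ i, (if n i % 3 = 0 then (0:ℕ) else 1) = ∑ i, psiP (n i) := by
        rw [← Finset.sum_add_distrib]
        apply Finset.sum_congr rfl
        intro i _
        exact cnt_mod0 (n i) (hn i)
      refine absurd (show (none : Option (Σ i : Fin k, Fin (n i)))
          ∈ pattS (n := n) true (fun _ => 0) from rfl) ?_
      apply hall
      constructor
      · exact hdis
      · intro F' hd'
        by_cases h0' : none ∈ F'
        · obtain ⟨g, hg1, hgk, hb⟩ := bound_with hn F' hd' h0'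
          have hg0 : g = 0 := by
            by_contra hgne
            obtain ⟨i1, hi1⟩ := hgk (by omega)
            exact hk1pos i1 hi1
          omega
        · have hb := bound_without F' hd' h0'
          omega
  · -- condition → ∀ F max, none ∉ F
    intro hcond F hF h0
    obtain ⟨hd, hmax⟩ := hF
    obtain ⟨g, hg1, hgk, hb⟩ := bound_with hn F hd h0
    have hdis0 : IsDissocSet (spider k n) (pattS (n := n) false (fun _ => 2)) := by
      apply pattS_dissoc
      · intro i; omega
      · intro h; exact absurd h (by simp)
      · intro h; exact absurd h (by simp)
    have hcard0 : (pattS (n := n) false (fun _ => (2:ℕ))).ncard = ∑ i, psiP (n i) := by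
      rw [pattS_ncard, if_neg (by simp)]
      rw [zero_add]
      apply Finset.sum_congr rfl
      intro i _
      exact cnt_mod2 (n i)
    have hle := hmax _ hdis0
    rw [hcard0] at hle
    have hgcase : g = 0 ∨ (g = 1 ∧ 1 ≤ (Finset.univ.filter fun i => n i % 3 = 1).card) := by
      by_cases hg : g = 1
      · right
        refine ⟨hg, ?_⟩
        obtain ⟨i1, hi1⟩ := hgk hg
        apply Finset.card_pos.2
        exact ⟨i1, Finset.mem_filter.2 ⟨Finset.mem_univ _, hi1⟩⟩
      · left; omega
    rcases hcond with hc | hc <;> rcases hgcase with hg | hg <;> omega
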